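/- arXiv:0807.1142 — 2 statements merged into one kernel-verified Lean document; each statement's English description precedes it below -/
import Mathlib

section
/- Let K be a field of characteristic zero and let p ∈ K[x,y] have outer rank two, i.e., there is no automorphism α of K[x,y] with α(p) ∈ K[x]. Let f, g ∈ K[x₁,...,xₙ] with total degrees deg f = m and deg g = n. Then the weighted degree of p, where x has weight m and y has weight n, satisfies w_{m,n}(p) ≥ m + n. -/
/-!
If `w_{m,n}(p) < m + n` and, say, `m ≤ n`, then every monomial `x^a y^b` of `p` satisfies
`a m + b n < m + n`, which forces `b = 0` or `x^a y^b = y`. Hence `p = e y + r(x)`. If `e = 0`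
then `p ∈ K[x]`; otherwise `p` is the image of `y` under the elementary automorphism
`y ↦ e y + r(x)`, so it is a coordinate and can be moved to `x`. Either way `p` has outer rank one.
-/

open MvPolynomial

namespace MvPolynomial

section Shear

variable {R σ : Type*} [CommRing R] [DecidableEq σ] {i j : σ}

theorem aeval_update_X_aeval_X (hij : i ≠ j) (v : MvPolynomial σ R) (r : Polynomial R) :
    aeval (Function.update X j v) (Polynomial.aeval (X i : MvPolynomial σ R) r) =
      Polynomial.aeval (X i) r := by
  rw [← Polynomial.aeval_algHom_apply, aeval_X, Function.update_of_ne hij]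

noncomputable def shear (hij : i ≠ j) (c : Rˣ) (r : Polynomial R) :
    MvPolynomial σ R ≃ₐ[R] MvPolynomial σ R :=
  AlgEquiv.ofAlgHom
    (aeval (Function.update X j (C (c : R) * X j + Polynomial.aeval (X i) r)))
    (aeval (Function.update X j (C (↑c⁻¹ : R) * (X j - Polynomial.aeval (X i) r))))
    (by
      refine algHom_ext fun k => ?_
      rcases eq_or_ne k j with rfl | hk
      · simp only [AlgHom.comp_apply, aeval_X, Function.update_self, map_mul, map_sub,
          algHom_C, algebraMap_eq, aeval_update_X_aeval_X hij, AlgHom.id_apply]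
        rw [add_sub_cancel_right, ← mul_assoc, ← C_mul, Units.inv_mul, C_1, one_mul]
      · simp [hk])
    (by
      refine algHom_ext fun k => ?_
      rcases eq_or_ne k j with rfl | hk
      · simp only [AlgHom.comp_apply, aeval_X, Function.update_self, map_mul, map_add,
          algHom_C, algebraMap_eq, aeval_update_X_aeval_X hij, AlgHom.id_apply]
        rw [← mul_assoc, ← C_mul, Units.mul_inv, C_1, one_mul, sub_add_cancel]
      · simp [hk])

theorem shear_X_right (hij : i ≠ j) (c : Rˣ) (r : Polynomial R) :
    shear hij c r (X j) = C (c : R) * X j + Polynomial.aeval (X i) r := by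
  simp [shear]

end Shear

section Coordinate

variable {K σ : Type*} [Field K] [DecidableEq σ] {i j : σ}

theorem exists_algEquiv_mem_adjoin_X_of_sub_C_mul_X_mem (hij : i ≠ j) (k : σ)
    {p : MvPolynomial σ K} {e : K} (hp : p - C e * X j ∈ Algebra.adjoin K {X i}) :
    ∃ α : MvPolynomial σ K ≃ₐ[K] MvPolynomial σ K, α p ∈ Algebra.adjoin K {X k} := by
  rw [Algebra.adjoin_singleton_eq_range_aeval] at hp
  obtain ⟨r, hr⟩ := hp
  obtain rfl : p = C e * X j + Polynomial.aeval (X i) r := by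
    rw [AlgHom.toRingHom_eq_coe, RingHom.coe_coe] at hr
    rw [hr, add_sub_cancel]
  rcases eq_or_ne e 0 with rfl | he
  · refine ⟨renameEquiv K (Equiv.swap i k), ?_⟩
    rw [C_0, zero_mul, zero_add, renameEquiv_apply, ← Polynomial.aeval_algHom_apply, rename_X,
      Equiv.swap_apply_left]
    exact Polynomial.aeval_mem_adjoin_singleton K (X k)
  · refine ⟨(shear hij (Units.mk0 e he) r).symm.trans (renameEquiv K (Equiv.swap j k)), ?_⟩
    have hp : C e * X j + Polynomial.aeval (X i) r = shear hij (Units.mk0 e he) r (X j) := by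
      rw [shear_X_right, Units.val_mk0]
    rw [hp, AlgEquiv.trans_apply, AlgEquiv.symm_apply_apply, renameEquiv_apply, rename_X,
      Equiv.swap_apply_left]
    exact Algebra.subset_adjoin rfl

end Coordinate

theorem sub_C_coeff_mul_X_mem_supported {R σ : Type*} [CommRing R] [DecidableEq σ] {j : σ}
    {p : MvPolynomial σ R} (h : ∀ d ∈ p.support, d j = 0 ∨ d = Finsupp.single j 1) :
    p - C (coeff (Finsupp.single j 1) p) * X j ∈ supported R {j}ᶜ := by
  rw [mem_supported]
  intro k hk
  obtain ⟨d, hd, hkd⟩ := (mem_vars_iff_mem_support k).mp hk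
  rintro rfl
  rw [mem_support_iff, coeff_sub, coeff_C_mul, coeff_X] at hd
  by_cases hdj : Finsupp.single k 1 = d
  · subst hdj
    simp at hd
  · rw [if_neg hdj, mul_zero, sub_zero, ← mem_support_iff] at hd
    rcases h d hd with h0 | rfl
    · exact Finsupp.mem_support_iff.mp hkd h0
    · exact hdj rfl

theorem supported_compl_singleton_eq_adjoin_X {R : Type*} [CommRing R] {i j : Fin 2}
    (hij : i ≠ j) : supported R ({j}ᶜ : Set (Fin 2)) = Algebra.adjoin R {X i} := by
  have hcompl : ({j}ᶜ : Set (Fin 2)) = {i} := by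
    ext k
    simp only [Set.mem_compl_iff, Set.mem_singleton_iff]
    omega
  rw [hcompl, supported_eq_adjoin_X, Set.image_singleton]

end MvPolynomial

theorem Nat.eq_zero_or_eq_zero_and_eq_one_of_mul_add_mul_lt {a b m n : ℕ} (hmn : m ≤ n)
    (h : a * m + b * n < m + n) : b = 0 ∨ a = 0 ∧ b = 1 := by
  rcases b with _ | _ | b
  · exact Or.inl rfl
  · exact Or.inr ⟨by nlinarith, rfl⟩
  · nlinarith

theorem Finsupp.eq_zero_or_eq_single_of_weight_lt {w : Fin 2 → ℕ} {i j : Fin 2} (hij : i ≠ j)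
    (hw : w i ≤ w j) {d : Fin 2 →₀ ℕ} (h : weight w d < w i + w j) :
    d j = 0 ∨ d = single j 1 := by
  have hweight : weight w d = d i * w i + d j * w j := by
    rw [weight_apply, sum_fintype _ _ (by simp), Fin.sum_univ_two]
    fin_cases i <;> fin_cases j <;> simp_all [add_comm]
  rw [hweight] at h
  refine (Nat.eq_zero_or_eq_zero_and_eq_one_of_mul_add_mul_lt hw h).imp_right fun ⟨hi, hj⟩ => ?_
  ext k
  fin_cases i <;> fin_cases j <;> fin_cases k <;> simp_all

theorem weighted_degree_of_outer_rank_two_general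
    (K : Type*) [Field K]
    (p : MvPolynomial (Fin 2) K)
    (horank : ¬ ∃ α : MvPolynomial (Fin 2) K ≃ₐ[K] MvPolynomial (Fin 2) K,
        α p ∈ Algebra.adjoin K ({X 0} : Set (MvPolynomial (Fin 2) K)))
    (m n : ℕ) :
    m + n ≤ weightedTotalDegree ![m, n] p := by
  by_contra! hlt
  obtain ⟨i, j, hij, hw, hsum⟩ : ∃ i j : Fin 2,
      i ≠ j ∧ ![m, n] i ≤ ![m, n] j ∧ ![m, n] i + ![m, n] j = m + n := by
    rcases le_total m n with h | h
    exacts [⟨0, 1, by decide, h, rfl⟩, ⟨1, 0, by decide, h, add_comm n m⟩]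
  have hshape : ∀ d ∈ p.support, d j = 0 ∨ d = Finsupp.single j 1 := fun d hd =>
    Finsupp.eq_zero_or_eq_single_of_weight_lt hij hw
      ((le_weightedTotalDegree _ hd).trans_lt (hsum ▸ hlt))
  have hsub := sub_C_coeff_mul_X_mem_supported hshape
  rw [supported_compl_singleton_eq_adjoin_X hij] at hsub
  exact horank (exists_algEquiv_mem_adjoin_X_of_sub_C_mul_X_mem hij 0 hsub)

/-- If p ∈ K[x,y] has outer rank two and deg f = m, deg g = n, then
the (m,n)-weighted degree of p is at least m + n. -/
theorem weighted_degree_of_outer_rank_two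
    (K : Type*) [Field K] [CharZero K]
    (p : MvPolynomial (Fin 2) K)
    (horank : ¬ ∃ α : MvPolynomial (Fin 2) K ≃ₐ[K] MvPolynomial (Fin 2) K,
        α p ∈ Algebra.adjoin K ({X 0} : Set (MvPolynomial (Fin 2) K)))
    (ν : ℕ) (f g : MvPolynomial (Fin ν) K) (m n : ℕ)
    (hf : f.totalDegree = m) (hg : g.totalDegree = n) :
    m + n ≤ weightedTotalDegree ![m, n] p :=
  weighted_degree_of_outer_rank_two_general K p horank m n
end

section
/- Let K be a field of characteristic zero, r = x + y·q(x,y) ∈ K[x,y] with q ∉ K[y], and let π be the endomorphism of K[x,y] with π(x) = r, π(y) = 0. Let α be the automorphism with α(x) = x, α(y) = y + x^M where M > deg q. Then for any f ∈ K[t] of positive degree, π(α(f(r))) = f(r + r^M · q(r, r^M)), and if x^M − y does not divide q(x,y), then q(r, r^M) ≠ 0, so π(α(f(r))) ≠ f(c·r + d) for all c ∈ K*, d ∈ K. -/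
/-!
Composing, π ∘ α is evaluation at (r, r^M), so it maps f(r) to f(s) with s = r + r^M·q(r, r^M).
Setting y = 0 sends r to t and s to t + t^M·q(t, t^M); if x^M − y ∤ q then q(t, t^M) ≠ 0
(the substitution y ↦ x^M is the identity modulo x^M − y), so s specializes to a polynomial
of degree M + deg q(t, t^M) ≥ 2, while c·r + d specializes to a linear one.
Composing the nonconstant f with these gives polynomials of different degrees.
-/

open MvPolynomial

namespace MvPolynomial

variable {R σ : Type*}

theorem totalDegree_pos_of_notMem_subalgebra [CommSemiring R] {S : Subalgebra R (MvPolynomial σ R)}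
    {p : MvPolynomial σ R} (hp : p ∉ S) : 0 < p.totalDegree := by
  refine Nat.pos_of_ne_zero fun h => hp ?_
  rw [totalDegree_eq_zero_iff_eq_C.mp h]
  exact S.algebraMap_mem _

theorem sub_aeval_mem_of_forall_X_sub_mem [CommRing R] {I : Ideal (MvPolynomial σ R)}
    {v : σ → MvPolynomial σ R} (hv : ∀ i, X i - v i ∈ I) (p : MvPolynomial σ R) :
    p - aeval v p ∈ I := by
  have hcomp : (Ideal.Quotient.mkₐ R I).comp (aeval v) = Ideal.Quotient.mkₐ R I :=
    algHom_ext fun i => by simpa using (Ideal.Quotient.eq.mpr (hv i)).symm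
  exact Ideal.Quotient.eq.mp (by simpa using (DFunLike.congr_fun hcomp p).symm)

theorem X_pow_sub_X_dvd_of_aeval_eq_zero [CommRing R] {M : ℕ} {p : MvPolynomial (Fin 2) R}
    (hp : aeval ![(Polynomial.X : Polynomial R), Polynomial.X ^ M] p = 0) : X 0 ^ M - X 1 ∣ p := by
  have hdiag : aeval ![X 0, (X 0 : MvPolynomial (Fin 2) R) ^ M] p = 0 := by
    have hcomp := comp_aeval_apply (Polynomial.aeval (X 0 : MvPolynomial (Fin 2) R))
      (f := ![Polynomial.X, Polynomial.X ^ M]) p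
    rw [hp, map_zero] at hcomp
    convert hcomp.symm using 2
    ext i
    fin_cases i <;> simp
  have hmem := sub_aeval_mem_of_forall_X_sub_mem (I := Ideal.span {X 0 ^ M - X 1})
    (v := ![X 0, X 0 ^ M]) (fun i => by
      fin_cases i
      · simp
      · exact Ideal.mem_span_singleton.mpr ⟨-1, by simp⟩) p
  rwa [hdiag, sub_zero, Ideal.mem_span_singleton] at hmem

theorem aeval_zero_comp_aeval_X_add_X_pow [CommSemiring R] {A : Type*} [CommSemiring A]
    [Algebra R A] (a : A) (M : ℕ) :
    (aeval ![a, 0]).comp (aeval ![X 0, X 1 + X 0 ^ M] :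
      MvPolynomial (Fin 2) R →ₐ[R] MvPolynomial (Fin 2) R) = aeval ![a, a ^ M] := by
  ext i
  fin_cases i <;> simp

end MvPolynomial

namespace Polynomial

variable {R : Type*}

theorem natDegree_X_add_X_pow_mul [Semiring R] [Nontrivial R] {M : ℕ} (hM : 2 ≤ M) {u : R[X]}
    (hu : u ≠ 0) : (X + X ^ M * u).natDegree = M + u.natDegree := by
  rw [natDegree_add_eq_right_of_natDegree_lt, natDegree_X_pow_mul _ hu, add_comm]
  rw [natDegree_X_pow_mul _ hu, natDegree_X]
  omega

theorem comp_ne_comp_of_natDegree_ne [CommRing R] [IsDomain R] {f g h : R[X]}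
    (hf : 0 < f.natDegree) (hgh : g.natDegree ≠ h.natDegree) : f.comp g ≠ f.comp h := fun heq =>
  hgh <| mul_left_cancel₀ hf.ne' <| by simpa only [natDegree_comp] using congrArg natDegree heq

end Polynomial

theorem retraction_orbit_computation_general
    (K : Type*) [Field K]
    (q : MvPolynomial (Fin 2) K)
    (hq : q ∉ Algebra.adjoin K ({X 1} : Set (MvPolynomial (Fin 2) K)))
    (M : ℕ) (hM : q.totalDegree < M)
    (r : MvPolynomial (Fin 2) K) (hr : r = X 0 + X 1 * q)
    (π : MvPolynomial (Fin 2) K →ₐ[K] MvPolynomial (Fin 2) K)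
    (hπ : π = aeval ![r, 0])
    (α : MvPolynomial (Fin 2) K →ₐ[K] MvPolynomial (Fin 2) K)
    (hα : α = aeval ![X 0, X 1 + X 0 ^ M])
    (f : Polynomial K) (hf : 0 < f.natDegree) :
    π (α (Polynomial.aeval r f)) =
      Polynomial.aeval (r + r ^ M * aeval ![r, r ^ M] q) f ∧
    (¬ (X 0 ^ M - X 1 ∣ q) →
      aeval ![r, r ^ M] q ≠ 0 ∧
      ∀ c d : K, c ≠ 0 →
        π (α (Polynomial.aeval r f)) ≠ Polynomial.aeval (C c * r + C d) f) := by
  have hM2 : 2 ≤ M := by have := totalDegree_pos_of_notMem_subalgebra hq; omega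
  have hpart : π (α (Polynomial.aeval r f)) =
      Polynomial.aeval (r + r ^ M * aeval ![r, r ^ M] q) f := by
    have hs : aeval ![r, r ^ M] (X 0 + X 1 * q) = r + r ^ M * aeval ![r, r ^ M] q := by simp
    rw [← hr] at hs
    rw [← AlgHom.comp_apply, hπ, hα, aeval_zero_comp_aeval_X_add_X_pow, ← Polynomial.aeval_algHom_apply, hs]
  refine ⟨hpart, fun hdvd => ?_⟩
  set δ : MvPolynomial (Fin 2) K →ₐ[K] Polynomial K := aeval ![Polynomial.X, 0]
  set u : Polynomial K := aeval ![Polynomial.X, Polynomial.X ^ M] q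
  have hδr : δ r = Polynomial.X := by simp [δ, hr]
  have hδC (a : K) : δ (C a) = Polynomial.C a := by simp [δ]
  have hδq : δ (aeval ![r, r ^ M] q) = u := by
    rw [comp_aeval_apply]
    congr 1
    ext i
    fin_cases i <;> simp [hδr]
  have hu : u ≠ 0 := mt X_pow_sub_X_dvd_of_aeval_eq_zero hdvd
  refine ⟨fun h0 => hu (by rw [← hδq, h0, map_zero]), fun c d hc heq => ?_⟩
  have hspec := congrArg δ (hpart ▸ heq)
  simp only [← Polynomial.aeval_algHom_apply, map_add, map_mul, map_pow, hδr, hδq, hδC,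
    ← Polynomial.comp_eq_aeval] at hspec
  refine Polynomial.comp_ne_comp_of_natDegree_ne hf ?_ hspec
  rw [Polynomial.natDegree_X_add_X_pow_mul hM2 hu, Polynomial.natDegree_linear hc]
  omega

/-- The retraction π onto K[r] (r = x + y·q) does not send α(f(r)) to any
f(c·r + d), where α is the automorphism x ↦ x, y ↦ y + x^M with M > deg q. -/
theorem retraction_orbit_computation
    (K : Type*) [Field K] [CharZero K]
    (q : MvPolynomial (Fin 2) K)
    (hq : q ∉ Algebra.adjoin K ({X 1} : Set (MvPolynomial (Fin 2) K)))
    (M : ℕ) (hM : q.totalDegree < M)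
    (r : MvPolynomial (Fin 2) K) (hr : r = X 0 + X 1 * q)
    (π : MvPolynomial (Fin 2) K →ₐ[K] MvPolynomial (Fin 2) K)
    (hπ : π = aeval ![r, 0])
    (α : MvPolynomial (Fin 2) K →ₐ[K] MvPolynomial (Fin 2) K)
    (hα : α = aeval ![X 0, X 1 + X 0 ^ M])
    (f : Polynomial K) (hf : 0 < f.natDegree) :
    π (α (Polynomial.aeval r f)) =
      Polynomial.aeval (r + r ^ M * aeval ![r, r ^ M] q) f ∧
    (¬ (X 0 ^ M - X 1 ∣ q) →
      aeval ![r, r ^ M] q ≠ 0 ∧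
      ∀ c d : K, c ≠ 0 →
        π (α (Polynomial.aeval r f)) ≠ Polynomial.aeval (C c * r + C d) f) :=
  retraction_orbit_computation_general K q hq M hM r hr π hπ α hα f hf
end
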